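/- A self-conjugate partition λ is a t-core if and only if: (i) for every main diagonal hook length h of λ with h > 2t, h − 2t is also a main diagonal hook length of λ; and (ii) no two main diagonal hook lengths h1, h2 of λ satisfy h1 + h2 ≡ 0 (mod 2t). -/

import Mathlib

/-- An integer partition, given by its (weakly decreasing, eventually zero)
sequence of parts, indexed from `0`. -/
structure IntPartition where
  parts : ℕ → ℕ
  antitone : ∀ i j, i ≤ j → parts j ≤ parts i
  finite : ∃ N, ∀ i, N ≤ i → parts i = 0

namespace IntPartition

/-- The size of a partition: the sum of its parts. -/
noncomputable def size (lam : IntPartition) : ℕ := ∑ᶠ i, lam.parts i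

/-- The parts of the conjugate partition: `conjParts lam j` is the number of
rows `i` with `lam.parts i > j` (rows and columns are `0`-indexed). -/
noncomputable def conjParts (lam : IntPartition) (j : ℕ) : ℕ :=
  Nat.card {i : ℕ | j < lam.parts i}

/-- A partition is self-conjugate if it equals its conjugate. -/
def IsSelfConjugate (lam : IntPartition) : Prop :=
  ∀ j, lam.conjParts j = lam.parts j

/-- `(i, j)` (both `0`-indexed) is a cell of the Young diagram of `lam`. -/
def IsCell (lam : IntPartition) (i j : ℕ) : Prop := j < lam.parts i

/-- The hook length of the cell `(i, j)` (both `0`-indexed): the number of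
cells directly to the right, plus the number directly below, plus one. -/
noncomputable def hook (lam : IntPartition) (i j : ℕ) : ℕ :=
  (lam.parts i - j) + (lam.conjParts j - i) - 1

/-- A partition is a `t`-core if no hook length is divisible by `t`. -/
def IsCore (lam : IntPartition) (t : ℕ) : Prop :=
  ∀ i j, lam.IsCell i j → ¬ (t ∣ lam.hook i j)

/-- The size of the Durfee square: the largest `k` such that the partition has
at least `k` parts of size at least `k`. -/
noncomputable def durfee (lam : IntPartition) : ℕ :=
  Nat.card {i : ℕ | i < lam.parts i}

/-- A partition has distinct parts if its (nonzero) parts are pairwise different. -/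
def DistinctParts (lam : IntPartition) : Prop :=
  ∀ i j, lam.parts i ≠ 0 → lam.parts j ≠ 0 → i ≠ j → lam.parts i ≠ lam.parts j

/-- The set of main diagonal hook lengths of `lam`. -/
noncomputable def MD (lam : IntPartition) : Set ℕ :=
  {h | ∃ i < lam.durfee, lam.hook i i = h}

/-- `lam ∈ DS(t)`: `lam` is a self-conjugate `(t, t+1)`-core partition whose
first `durfee lam` parts are pairwise distinct. -/
def InDS (lam : IntPartition) (t : ℕ) : Prop :=
  lam.IsSelfConjugate ∧ lam.IsCore t ∧ lam.IsCore (t + 1) ∧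
    ∀ i j, i < lam.durfee → j < lam.durfee → i ≠ j → lam.parts i ≠ lam.parts j

end IntPartition

/-!
Let `h₀ > h₁ > ⋯ > h_{k-1}` be the main diagonal hook lengths of a self-conjugate partition with
Durfee square of size `k`. Inside the Durfee square the hook length at `(i, j)` is `(hᵢ + hⱼ) / 2`,
and by symmetry every other hook length is that of an arm cell `(i, j)` with `i < k ≤ j`. The arm
hook lengths of row `i` and the half-gaps `(hᵢ - hᵣ) / 2`, `i < r < k`, are disjoint and together
fill `{1, …, (hᵢ - 1) / 2}` exactly. So `m` is an arm hook length of row `i` iff `2m < hᵢ` and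
`hᵢ - 2m` is not a diagonal hook length. Then (i) says that no arm hook length is a multiple of `t`
(iterating it, `hᵢ - 2ts` stays diagonal), and (ii) says the same for the square.
-/

lemma Nat.mem_iff_lt_card_of_isLowerSet {S : Set ℕ} (hS : IsLowerSet S) (hfin : S.Finite)
    (x : ℕ) : x ∈ S ↔ x < Nat.card S := by
  rcases hS.eq_univ_or_Iio with rfl | ⟨a, rfl⟩
  · exact absurd hfin Set.infinite_univ
  · simp

lemma Set.sub_mul_mem_of_forall_sub_mem {S : Set ℕ} {d : ℕ} (hS : ∀ h ∈ S, d < h → h - d ∈ S)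
    {h : ℕ} (hh : h ∈ S) (s : ℕ) (hs : d * s < h) : h - d * s ∈ S := by
  induction s with
  | zero => simpa using hh
  | succ s ih =>
    have hmem := hS _ (ih (by nlinarith)) (by rw [mul_add_one] at hs; omega)
    rwa [Nat.sub_sub, ← mul_add_one] at hmem

namespace IntPartition

variable (lam : IntPartition)

lemma lt_card_setOf_lt_parts_iff {g : ℕ → ℕ} (hg : Monotone g) (r : ℕ) :
    r < Nat.card {i | g i < lam.parts i} ↔ g r < lam.parts r := by
  obtain ⟨N, hN⟩ := lam.finite
  refine (Nat.mem_iff_lt_card_of_isLowerSet (fun a b hab hb => ?_)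
    ((Set.finite_Iio N).subset fun i hi => ?_) r).symm
  · exact (hg hab).trans_lt (lt_of_lt_of_le hb (lam.antitone b a hab))
  · by_contra hiN
    have := hN i (not_lt.mp hiN)
    simp_all

lemma lt_conjParts_iff (j r : ℕ) : r < lam.conjParts j ↔ j < lam.parts r :=
  lam.lt_card_setOf_lt_parts_iff monotone_const r

lemma lt_durfee_iff (i : ℕ) : i < lam.durfee ↔ i < lam.parts i :=
  lam.lt_card_setOf_lt_parts_iff monotone_id i

lemma lt_conjParts_self_iff (j : ℕ) : j < lam.conjParts j ↔ j < lam.durfee :=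
  (lam.lt_conjParts_iff j j).trans (lam.lt_durfee_iff j).symm

lemma conjParts_antitone : Antitone lam.conjParts := by
  intro j j' hjj'
  by_contra! hlt
  exact lt_irrefl _ ((lam.lt_conjParts_iff j _).mpr
    (hjj'.trans_lt ((lam.lt_conjParts_iff j' _).mp hlt)))

lemma durfee_le_parts {i : ℕ} (hi : i < lam.durfee) : lam.durfee ≤ lam.parts i := by
  have hlast := (lam.lt_durfee_iff (lam.durfee - 1)).mp (by omega)
  have := lam.antitone i (lam.durfee - 1) (by omega)
  omega

lemma isCell_of_lt_durfee {i j : ℕ} (hi : i < lam.durfee) (hj : j < lam.durfee) :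
    lam.IsCell i j :=
  hj.trans_le (lam.durfee_le_parts hi)

lemma lt_durfee_or_lt_durfee_of_isCell {i j : ℕ} (hcell : lam.IsCell i j) :
    i < lam.durfee ∨ j < lam.durfee := by
  by_contra! h
  have := (lam.lt_durfee_iff lam.durfee).not.mp (lt_irrefl _)
  have := lam.antitone _ _ h.1
  exact absurd hcell (by unfold IsCell; omega)

/-- `parts r + conjParts j - r - j - 1` is the hook length of `(r, j)` when this is a cell and is
negative otherwise, so it never vanishes. -/
lemma parts_add_conjParts_ne (r j : ℕ) : lam.parts r + lam.conjParts j ≠ r + j + 1 := by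
  have := lam.lt_conjParts_iff j r
  omega

lemma hook_strictAntiOn (i : ℕ) : StrictAntiOn (lam.hook i) (Set.Iio (lam.parts i)) := by
  intro j _ j' hj' hjj'
  have := lam.conjParts_antitone hjj'.le
  simp only [Set.mem_Iio] at hj'
  unfold hook
  omega

lemma hook_self_strictAntiOn : StrictAntiOn (fun r => lam.hook r r) (Set.Iio lam.durfee) := by
  intro r _ r' hr' hrr'
  have := lam.antitone r r' hrr'.le
  have := lam.conjParts_antitone hrr'.le
  have := (lam.lt_durfee_iff r').mp hr'
  simp only [hook]
  omega

noncomputable def armHooks (i : ℕ) : Finset ℕ :=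
  (Finset.Ico lam.durfee (lam.parts i)).image (lam.hook i)

noncomputable def diagHalfGaps (i : ℕ) : Finset ℕ :=
  (Finset.Ioo i lam.durfee).image fun r => (lam.hook i i - lam.hook r r) / 2

lemma mem_armHooks {i m : ℕ} :
    m ∈ lam.armHooks i ↔ ∃ j, lam.durfee ≤ j ∧ lam.IsCell i j ∧ lam.hook i j = m := by
  simp [armHooks, IsCell, and_assoc]

lemma card_armHooks (i : ℕ) : (lam.armHooks i).card = lam.parts i - lam.durfee := by
  rw [armHooks, Finset.card_image_of_injOn, Nat.card_Ico]
  exact (lam.hook_strictAntiOn i).injOn.mono fun j hj => (Finset.mem_Ico.mp hj).2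

lemma armHooks_subset {i : ℕ} (hi : i < lam.durfee) :
    lam.armHooks i ⊆ Finset.Icc 1 (lam.parts i - i - 1) := by
  intro m hm
  obtain ⟨j, hkj, hcell, rfl⟩ := lam.mem_armHooks.mp hm
  have := (lam.lt_conjParts_iff j i).mpr hcell
  have := (lam.lt_conjParts_self_iff j).not.mpr (not_lt.mpr hkj)
  unfold IsCell at hcell
  rw [Finset.mem_Icc, hook]
  omega

variable {lam} (hsc : lam.IsSelfConjugate)
include hsc

lemma two_mul_parts_eq_hook_self {i : ℕ} (hi : i < lam.durfee) :
    2 * lam.parts i = lam.hook i i + 2 * i + 1 := by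
  have := (lam.lt_durfee_iff i).mp hi
  rw [hook, hsc i]
  omega

lemma isCell_comm {i j : ℕ} : lam.IsCell i j ↔ lam.IsCell j i := by
  rw [IsCell, IsCell, ← lt_conjParts_iff, hsc]

lemma hook_comm (i j : ℕ) : lam.hook i j = lam.hook j i := by
  rw [hook, hook, hsc i, hsc j, add_comm]

lemma two_mul_hook_of_lt_durfee {i j : ℕ} (hi : i < lam.durfee) (hj : j < lam.durfee) :
    2 * lam.hook i j = lam.hook i i + lam.hook j j := by
  have := lam.durfee_le_parts hi
  have := lam.durfee_le_parts hj
  have := two_mul_parts_eq_hook_self hsc hi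
  have := two_mul_parts_eq_hook_self hsc hj
  rw [hook, hsc j]
  omega

lemma diagHalfGaps_subset {i : ℕ} (hi : i < lam.durfee) :
    lam.diagHalfGaps i ⊆ Finset.Icc 1 (lam.parts i - i - 1) := by
  intro m hm
  obtain ⟨r, hr, rfl⟩ := Finset.mem_image.mp hm
  rw [Finset.mem_Ioo] at hr
  have := two_mul_parts_eq_hook_self hsc hi
  have := two_mul_parts_eq_hook_self hsc hr.2
  have : lam.hook r r < lam.hook i i := lam.hook_self_strictAntiOn hi hr.2 hr.1
  have := (lam.lt_durfee_iff r).mp hr.2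
  rw [Finset.mem_Icc]
  omega

lemma card_diagHalfGaps {i : ℕ} (hi : i < lam.durfee) :
    (lam.diagHalfGaps i).card = lam.durfee - i - 1 := by
  rw [diagHalfGaps, Finset.card_image_of_injOn, Nat.card_Ioo]
  intro r hr r' hr' hgap
  simp only [Finset.coe_Ioo, Set.mem_Ioo] at hr hr' hgap
  refine lam.hook_self_strictAntiOn.injOn hr.2 hr'.2 ?_
  have := two_mul_parts_eq_hook_self hsc hi
  have := two_mul_parts_eq_hook_self hsc hr.2
  have := two_mul_parts_eq_hook_self hsc hr'.2
  have : lam.hook r r < lam.hook i i := lam.hook_self_strictAntiOn hi hr.2 hr.1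
  have : lam.hook r' r' < lam.hook i i := lam.hook_self_strictAntiOn hi hr'.2 hr'.1
  omega

lemma disjoint_armHooks_diagHalfGaps {i : ℕ} (hi : i < lam.durfee) :
    Disjoint (lam.armHooks i) (lam.diagHalfGaps i) := by
  rw [Finset.disjoint_left]
  intro m hm hm'
  obtain ⟨j, -, hcell, rfl⟩ := lam.mem_armHooks.mp hm
  obtain ⟨r, hr, hgap⟩ := Finset.mem_image.mp hm'
  rw [Finset.mem_Ioo] at hr
  have := (lam.lt_conjParts_iff j i).mpr hcell
  have := two_mul_parts_eq_hook_self hsc hi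
  have := two_mul_parts_eq_hook_self hsc hr.2
  have := (lam.lt_durfee_iff r).mp hr.2
  have := lam.antitone i r hr.1.le
  have := lam.parts_add_conjParts_ne r j
  unfold IsCell at hcell
  have hhook : lam.hook i j = lam.parts i - j + (lam.conjParts j - i) - 1 := rfl
  omega

lemma armHooks_union_diagHalfGaps {i : ℕ} (hi : i < lam.durfee) :
    lam.armHooks i ∪ lam.diagHalfGaps i = Finset.Icc 1 (lam.parts i - i - 1) := by
  refine Finset.eq_of_subset_of_card_le
    (Finset.union_subset (lam.armHooks_subset hi) (diagHalfGaps_subset hsc hi)) ?_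
  rw [Finset.card_union_of_disjoint (disjoint_armHooks_diagHalfGaps hsc hi), card_armHooks,
    card_diagHalfGaps hsc hi, Nat.card_Icc]
  have := lam.durfee_le_parts hi
  omega

lemma mem_armHooks_iff {i m : ℕ} (hi : i < lam.durfee) :
    m ∈ lam.armHooks i ↔ 2 * m < lam.hook i i ∧ lam.hook i i - 2 * m ∉ lam.MD := by
  have hpart := two_mul_parts_eq_hook_self hsc hi
  have hunion := Finset.ext_iff.mp (armHooks_union_diagHalfGaps hsc hi) m
  have hdisj := Finset.disjoint_left.mp (disjoint_armHooks_diagHalfGaps hsc hi)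
  rw [Finset.mem_union, Finset.mem_Icc] at hunion
  have hgap : m ∈ lam.diagHalfGaps i ↔ 1 ≤ m ∧ lam.hook i i - 2 * m ∈ lam.MD := by
    constructor
    · intro hm
      obtain ⟨r, hr, rfl⟩ := Finset.mem_image.mp hm
      rw [Finset.mem_Ioo] at hr
      have := two_mul_parts_eq_hook_self hsc hr.2
      have : lam.hook r r < lam.hook i i := lam.hook_self_strictAntiOn hi hr.2 hr.1
      exact ⟨by omega, r, hr.2, by omega⟩
    · rintro ⟨hm, r, hr, hdiag⟩
      have hir : i < r := (lam.hook_self_strictAntiOn.lt_iff_gt hr hi).mp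
        (show lam.hook r r < lam.hook i i by omega)
      have := two_mul_parts_eq_hook_self hsc hr
      exact Finset.mem_image.mpr ⟨r, Finset.mem_Ioo.mpr ⟨hir, hr⟩, by omega⟩
  constructor
  · intro hm
    have := hunion.mp (Or.inl hm)
    exact ⟨by omega, fun hmd => hdisj hm (hgap.mpr ⟨this.1, hmd⟩)⟩
  · rintro ⟨hlt, hmd⟩
    by_cases hm : 1 ≤ m
    · exact (hunion.mpr ⟨hm, by omega⟩).resolve_right fun h => hmd (hgap.mp h).2
    · exact absurd ⟨i, hi, by omega⟩ hmd

end IntPartition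

open IntPartition in
theorem isCore_iff_of_selfConjugate_general (t : ℕ)
    (lam : IntPartition) (hsc : lam.IsSelfConjugate) :
    lam.IsCore t ↔
      ((∀ h ∈ lam.MD, 2 * t < h → h - 2 * t ∈ lam.MD) ∧
        ∀ h₁ ∈ lam.MD, ∀ h₂ ∈ lam.MD, ¬ (2 * t ∣ h₁ + h₂)) := by
  constructor
  · intro hcore
    refine ⟨?_, ?_⟩
    · rintro _ ⟨i, hi, rfl⟩ hlt
      by_contra hshift
      obtain ⟨j, -, hcell, hhook⟩ :=
        lam.mem_armHooks.mp ((mem_armHooks_iff hsc hi).mpr ⟨hlt, hshift⟩)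
      exact hcore i j hcell (hhook ▸ dvd_rfl)
    · rintro _ ⟨i, hi, rfl⟩ _ ⟨j, hj, rfl⟩ ⟨u, hu⟩
      refine hcore i j (lam.isCell_of_lt_durfee hi hj) ⟨u, ?_⟩
      linarith [two_mul_hook_of_lt_durfee hsc hi hj]
  · rintro ⟨hshift, hsum⟩ i j hcell ⟨s, hs⟩
    wlog hi : i < lam.durfee generalizing i j
    · exact this j i ((isCell_comm hsc).mp hcell) (hook_comm hsc i j ▸ hs)
        ((lam.lt_durfee_or_lt_durfee_of_isCell hcell).resolve_left hi)
    by_cases hj : j < lam.durfee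
    · exact hsum _ ⟨i, hi, rfl⟩ _ ⟨j, hj, rfl⟩
        ⟨s, by rw [← two_mul_hook_of_lt_durfee hsc hi hj, hs, mul_assoc]⟩
    · obtain ⟨hlt, hnot⟩ := (mem_armHooks_iff hsc hi).mp
        (lam.mem_armHooks.mpr ⟨j, not_lt.mp hj, hcell, hs⟩)
      rw [← mul_assoc] at hlt hnot
      exact hnot (Set.sub_mul_mem_of_forall_sub_mem hshift ⟨i, hi, rfl⟩ s hlt)

/-- Ford–Mai–Sze: a self-conjugate partition `lam` is a `t`-core if and only if
(i) for every main diagonal hook length `h > 2t`, `h - 2t` is also a main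
diagonal hook length, and (ii) no two main diagonal hook lengths sum to a
multiple of `2t`. -/
theorem isCore_iff_of_selfConjugate (t : ℕ) (ht : 1 ≤ t)
    (lam : IntPartition) (hsc : lam.IsSelfConjugate) :
    lam.IsCore t ↔
      ((∀ h ∈ lam.MD, 2 * t < h → h - 2 * t ∈ lam.MD) ∧
        ∀ h₁ ∈ lam.MD, ∀ h₂ ∈ lam.MD, ¬ (2 * t ∣ h₁ + h₂)) :=
  isCore_iff_of_selfConjugate_general t lam hsc
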